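/- arXiv:quant-ph/0701117 — 3 statements merged into one kernel-verified Lean document; each statement's English description precedes it below -/
import Mathlib

section
/- Define on the open simplex Δⁿ the contravariant metric g^{ij}(x) = ∑_{α,β=1}^n x^i (δ^i_α − x^α)(δ_{αβ} − 1/n) x^j (δ^j_β − x^β). Then g is invariant under the left translations of the group (Δⁿ, ⋆): for all u, x ∈ Δⁿ, letting J denote the derivative at x of the map z ↦ u⋆z (a linear map ℝⁿ → ℝⁿ), one has g^{ij}(u⋆x) = ∑_{k,l=1}^n J^i_k J^j_l g^{kl}(x). -/
/-!
Write `P(x) = diag(x) - x xᵀ`. Since `P(x) 𝟙 = 0` when `∑ xⁱ = 1`, the centering factor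
`δ_{αβ} - 1/n` in the definition of `g` drops out and `g(x) = P(x) P(x)ᵀ` on the simplex.
The map `z ↦ u ⋆ z` is homogeneous of degree `0`, so its Jacobian `J` at `x` kills `x`;
together with the direct computation `J diag(x) = P(u ⋆ x)` this gives `J P(x) = P(u ⋆ x)`,
hence `J g(x) Jᵀ = (J P(x)) (J P(x))ᵀ = g(u ⋆ x)`.
-/

open Finset

/-- The open simplex `Δⁿ`: vectors with strictly positive entries summing to `1`. -/
def IsOpenSimplex {n : ℕ} (x : Fin n → ℝ) : Prop :=
  (∀ i, 0 < x i) ∧ ∑ i, x i = 1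

/-- The operation `x ⋆ y = (x ∘ y) / Tr(x ∘ y)`. -/
noncomputable def simplexMul {n : ℕ} (x y : Fin n → ℝ) : Fin n → ℝ :=
  fun i => x i * y i / ∑ k, x k * y k

/-- The contravariant metric
`g^{ij}(x) = ∑_{α,β} x^i (δ^i_α − x^α)(δ_{αβ} − 1/n) x^j (δ^j_β − x^β)`. -/
noncomputable def metricG {n : ℕ} (x : Fin n → ℝ) : Fin n → Fin n → ℝ :=
  fun i j => ∑ α, ∑ β,
    (x i * ((if i = α then (1 : ℝ) else 0) - x α)) *
      ((if α = β then (1 : ℝ) else 0) - 1 / n) *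
      (x j * ((if j = β then (1 : ℝ) else 0) - x β))

open Matrix

namespace Matrix

variable {ι R : Type*} [CommRing R]

theorem mul_mul_transpose_apply [Fintype ι] (A B : Matrix ι ι R) (i j : ι) :
    (A * B * Aᵀ) i j = ∑ k, ∑ l, A i k * A j l * B k l := by
  simp only [mul_apply, transpose_apply, Finset.sum_mul]
  rw [Finset.sum_comm]
  exact Finset.sum_congr rfl fun _ _ => Finset.sum_congr rfl fun _ _ => by ring

variable [DecidableEq ι]

def multinomialCov (x : ι → R) : Matrix ι ι R :=
  diagonal x - vecMulVec x x

theorem multinomialCov_apply (x : ι → R) (i j : ι) :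
    multinomialCov x i j = x i * ((if i = j then 1 else 0) - x j) := by
  by_cases h : i = j
  · subst h; simp [multinomialCov, vecMulVec_apply, mul_sub]
  · simp [multinomialCov, vecMulVec_apply, h]

theorem multinomialCov_mulVec_one [Fintype ι] {x : ι → R} (hx : ∑ i, x i = 1) :
    multinomialCov x *ᵥ 1 = 0 := by
  ext i
  simp [multinomialCov, sub_mulVec, mulVec_diagonal, vecMulVec_mulVec, dotProduct, hx]

end Matrix

theorem IsOpenSimplex.dotProduct_pos {n : ℕ} {u x : Fin n → ℝ}
    (hu : IsOpenSimplex u) (hx : IsOpenSimplex x) : 0 < u ⬝ᵥ x :=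
  Finset.sum_pos (fun i _ => mul_pos (hu.1 i) (hx.1 i))
    (Finset.nonempty_of_sum_ne_zero (hu.2.symm ▸ one_ne_zero))

theorem metricG_eq_mul_mul_transpose {n : ℕ} (x : Fin n → ℝ) :
    of (metricG x) = multinomialCov x * (1 - vecMulVec 1 fun _ => 1 / (n : ℝ)) *
      (multinomialCov x)ᵀ := by
  ext i j
  rw [mul_mul_transpose_apply, of_apply, metricG]
  refine Finset.sum_congr rfl fun α _ => Finset.sum_congr rfl fun β _ => ?_
  simp only [multinomialCov_apply, Matrix.sub_apply, one_apply, vecMulVec_apply, Pi.one_apply,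
    one_mul]
  ring

theorem metricG_eq_mul_transpose {n : ℕ} {x : Fin n → ℝ} (hx : ∑ i, x i = 1) :
    of (metricG x) = multinomialCov x * (multinomialCov x)ᵀ := by
  rw [metricG_eq_mul_mul_transpose, Matrix.mul_sub, Matrix.mul_one, mul_vecMulVec,
    multinomialCov_mulVec_one hx, zero_vecMulVec, sub_zero]

section simplexMul

variable {n : ℕ} {u x : Fin n → ℝ}

theorem simplexMul_apply (u x : Fin n → ℝ) (i : Fin n) :
    simplexMul u x i = u i * x i / (u ⬝ᵥ x) :=
  rfl

theorem dotProduct_smul_simplexMul (hS : u ⬝ᵥ x ≠ 0) : (u ⬝ᵥ x) • simplexMul u x = u * x := by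
  ext i
  rw [Pi.smul_apply, simplexMul_apply, smul_eq_mul, mul_div_cancel₀ _ hS, Pi.mul_apply]

theorem sum_simplexMul (hS : u ⬝ᵥ x ≠ 0) : ∑ i, simplexMul u x i = 1 := by
  simp only [simplexMul_apply, ← Finset.sum_div]
  exact div_self hS

theorem fderiv_simplexMul_apply (hS : u ⬝ᵥ x ≠ 0) (v : Fin n → ℝ) :
    fderiv ℝ (simplexMul u) x v = (u ⬝ᵥ x)⁻¹ • (u * v - (u ⬝ᵥ v) • simplexMul u x) := by
  have hdot : HasFDerivAt (u ⬝ᵥ ·) (dotProductBilin ℝ ℝ u).toContinuousLinearMap x :=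
    (dotProductBilin ℝ ℝ u).toContinuousLinearMap.hasFDerivAt
  have hderiv : HasFDerivAt (fun z => (u ⬝ᵥ z)⁻¹ • (u * z)) _ x :=
    ((hasFDerivAt_inv hS).comp x hdot).fun_smul ((hasFDerivAt_id x).const_mul u)
  have hquot : simplexMul u = fun z => (u ⬝ᵥ z)⁻¹ • (u * z) := by
    ext z i
    rw [simplexMul_apply, Pi.smul_apply, smul_eq_mul, Pi.mul_apply, inv_mul_eq_div]
  rw [hquot, hderiv.fderiv]
  ext i
  simp only [Function.comp_apply, _root_.add_apply, _root_.smul_apply,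
    ContinuousLinearMap.id_apply, smul_eq_mul, ContinuousLinearMap.smulRight_apply,
    ContinuousLinearMap.comp_apply, LinearMap.coe_toContinuousLinearMap',
    dotProductBilin_apply_apply, ContinuousLinearMap.toSpanSingleton_apply, mul_neg, neg_smul,
    Pi.add_apply, Pi.smul_apply, Pi.mul_apply, Pi.neg_apply, Pi.sub_apply]
  ring

theorem fderiv_simplexMul_self (hS : u ⬝ᵥ x ≠ 0) : fderiv ℝ (simplexMul u) x x = 0 := by
  rw [fderiv_simplexMul_apply hS, dotProduct_smul_simplexMul hS, sub_self, smul_zero]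

theorem toMatrix'_fderiv_simplexMul_mul_diagonal (hS : u ⬝ᵥ x ≠ 0) :
    LinearMap.toMatrix' (fderiv ℝ (simplexMul u) x : (Fin n → ℝ) →ₗ[ℝ] Fin n → ℝ) * diagonal x =
      multinomialCov (simplexMul u x) := by
  ext i k
  rw [mul_diagonal, LinearMap.toMatrix'_apply, ContinuousLinearMap.coe_coe,
    fderiv_simplexMul_apply hS]
  simp only [multinomialCov_apply, simplexMul_apply, Pi.smul_apply, Pi.sub_apply, Pi.mul_apply,
    dotProduct_single, Pi.single_apply, smul_eq_mul]
  split_ifs with h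
  · subst h; field_simp
  · field_simp; ring

theorem toMatrix'_fderiv_simplexMul_mul_multinomialCov (hS : u ⬝ᵥ x ≠ 0) :
    LinearMap.toMatrix' (fderiv ℝ (simplexMul u) x : (Fin n → ℝ) →ₗ[ℝ] Fin n → ℝ) *
      multinomialCov x = multinomialCov (simplexMul u x) := by
  rw [multinomialCov, Matrix.mul_sub, mul_vecMulVec, LinearMap.toMatrix'_mulVec,
    ContinuousLinearMap.coe_coe, fderiv_simplexMul_self hS, zero_vecMulVec, sub_zero,
    toMatrix'_fderiv_simplexMul_mul_diagonal hS]

end simplexMul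

theorem metricLeftInvariant_general {n : ℕ}
    (u x : Fin n → ℝ) (hu : IsOpenSimplex u) (hx : IsOpenSimplex x) :
    ∀ i j : Fin n,
      metricG (simplexMul u x) i j
        = ∑ k, ∑ l,
            (fderiv ℝ (fun z : Fin n → ℝ => simplexMul u z) x (Pi.single k 1) i) *
            (fderiv ℝ (fun z : Fin n → ℝ => simplexMul u z) x (Pi.single l 1) j) *
            metricG x k l := by
  intro i j
  have hS : u ⬝ᵥ x ≠ 0 := (hu.dotProduct_pos hx).ne'
  let J := LinearMap.toMatrix' (fderiv ℝ (simplexMul u) x : (Fin n → ℝ) →ₗ[ℝ] Fin n → ℝ)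
  have hJ : J * multinomialCov x = multinomialCov (simplexMul u x) :=
    toMatrix'_fderiv_simplexMul_mul_multinomialCov hS
  have hinvariant : of (metricG (simplexMul u x)) = J * of (metricG x) * Jᵀ := by
    rw [metricG_eq_mul_transpose (sum_simplexMul hS), metricG_eq_mul_transpose hx.2, ← hJ,
      transpose_mul, Matrix.mul_assoc, Matrix.mul_assoc, Matrix.mul_assoc]
  exact (congrFun₂ hinvariant i j).trans (mul_mul_transpose_apply J _ i j)

/-- The metric `g` is invariant under the left translations of the group `(Δⁿ, ⋆)`:
for `u, x ∈ Δⁿ`, letting `J` be the derivative at `x` of `z ↦ u ⋆ z`, one has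
`g^{ij}(u ⋆ x) = ∑_{k,l} J^i_k J^j_l g^{kl}(x)`. -/
theorem metricLeftInvariant {n : ℕ} (hn : 1 ≤ n)
    (u x : Fin n → ℝ) (hu : IsOpenSimplex u) (hx : IsOpenSimplex x) :
    ∀ i j : Fin n,
      metricG (simplexMul u x) i j
        = ∑ k, ∑ l,
            (fderiv ℝ (fun z : Fin n → ℝ => simplexMul u z) x (Pi.single k 1) i) *
            (fderiv ℝ (fun z : Fin n → ℝ => simplexMul u z) x (Pi.single l 1) j) *
            metricG x k l :=
  metricLeftInvariant_general u x hu hx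
end

section
/- For x in the closed simplex (x^i ≥ 0 for all i and ∑_{i=1}^n x^i = 1), let m_k(x) = ∑_{i=1}^n (x^i)^k denote the k-th moment. Then m_2(x) − 2 m_3(x) + m_2(x)² = ∑_{i=1}^n (x^i)² (1 − 2x^i + ∑_{k=1}^n (x^k)²) ≥ ∑_{i=1}^n (x^i)² (1 − x^i)² ≥ 0, and m_2(x) − 2 m_3(x) + m_2(x)² = 0 if and only if x is one of the vertices v_(1), ..., v_(n) of the closed simplex, where v_(k)^i = δ^i_k. -/
open Finset

/-- For `x` in the closed simplex, with moments `m_k(x) = ∑_i (x^i)^k`, one has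
`m_2 − 2 m_3 + m_2² = ∑_i (x^i)²(1 − 2x^i + ∑_k (x^k)²) ≥ ∑_i (x^i)²(1 − x^i)² ≥ 0`,
with `m_2 − 2 m_3 + m_2² = 0` if and only if `x` is a vertex of the closed simplex. -/
theorem momentFunctionVanishesOnlyAtVertices {n : ℕ} (hn : 1 ≤ n)
    (x : Fin n → ℝ) (hx : (∀ i, 0 ≤ x i) ∧ ∑ i, x i = 1) :
    ((∑ i, x i ^ 2) - 2 * (∑ i, x i ^ 3) + (∑ i, x i ^ 2) ^ 2
        = ∑ i, x i ^ 2 * (1 - 2 * x i + ∑ k, x k ^ 2)) ∧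
      (∑ i, x i ^ 2 * (1 - 2 * x i + ∑ k, x k ^ 2) ≥ ∑ i, x i ^ 2 * (1 - x i) ^ 2) ∧
      (∑ i, x i ^ 2 * (1 - x i) ^ 2 ≥ 0) ∧
      ((∑ i, x i ^ 2) - 2 * (∑ i, x i ^ 3) + (∑ i, x i ^ 2) ^ 2 = 0 ↔
        ∃ k, x = fun i => if i = k then (1 : ℝ) else 0) := by
  obtain ⟨hx0, hx1⟩ := hx
  have heq : (∑ i, x i ^ 2) - 2 * (∑ i, x i ^ 3) + (∑ i, x i ^ 2) ^ 2
      = ∑ i, x i ^ 2 * (1 - 2 * x i + ∑ k, x k ^ 2) := by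
    have h1 : ∀ i ∈ univ, x i ^ 2 * (1 - 2 * x i + ∑ k, x k ^ 2)
        = x i ^ 2 - 2 * x i ^ 3 + x i ^ 2 * (∑ k, x k ^ 2) := fun i _ => by ring
    rw [Finset.sum_congr rfl h1, Finset.sum_add_distrib, Finset.sum_sub_distrib,
      ← Finset.sum_mul, ← Finset.mul_sum, sq]
  have hm2 : ∀ i, x i ^ 2 ≤ ∑ k, x k ^ 2 := fun i =>
    Finset.single_le_sum (fun k _ => sq_nonneg (x k)) (mem_univ i)
  have hge : ∑ i, x i ^ 2 * (1 - 2 * x i + ∑ k, x k ^ 2) ≥ ∑ i, x i ^ 2 * (1 - x i) ^ 2 := by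
    apply Finset.sum_le_sum
    intro i _
    have : (1 - x i) ^ 2 ≤ 1 - 2 * x i + ∑ k, x k ^ 2 := by
      have := hm2 i; nlinarith
    exact mul_le_mul_of_nonneg_left this (sq_nonneg _)
  have hnn : ∑ i, x i ^ 2 * (1 - x i) ^ 2 ≥ 0 :=
    Finset.sum_nonneg fun i _ => mul_nonneg (sq_nonneg _) (sq_nonneg _)
  refine ⟨heq, hge, hnn, ?_, ?_⟩
  · intro h0
    have hz : ∑ i, x i ^ 2 * (1 - x i) ^ 2 = 0 := le_antisymm (by rw [heq] at h0; linarith) hnn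
    have hterm : ∀ i ∈ univ, x i ^ 2 * (1 - x i) ^ 2 = 0 :=
      (Finset.sum_eq_zero_iff_of_nonneg fun i _ => mul_nonneg (sq_nonneg _) (sq_nonneg _)).1 hz
    have h01 : ∀ i, x i = 0 ∨ x i = 1 := by
      intro i
      have := hterm i (mem_univ i)
      rcases mul_eq_zero.1 this with h | h
      · left; exact pow_eq_zero_iff (by norm_num) |>.1 h
      · right; have := pow_eq_zero_iff (n := 2) (by norm_num) |>.1 h; linarith
    have hk : ∃ k, x k = 1 := by
      by_contra hc
      push_neg at hc
      have : ∀ i ∈ univ, x i = 0 := fun i _ => (h01 i).resolve_right (hc i)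
      rw [Finset.sum_congr rfl this] at hx1
      simp at hx1
    obtain ⟨k, hk⟩ := hk
    refine ⟨k, funext fun i => ?_⟩
    by_cases hik : i = k
    · simp [hik, hk]
    · simp only [hik, if_false]
      have hs : ∑ j ∈ univ.erase k, x j = 0 := by
        have := Finset.add_sum_erase univ x (mem_univ k)
        rw [hx1] at this; linarith [hk ▸ this]
      have := (Finset.sum_eq_zero_iff_of_nonneg fun j _ => hx0 j).1 hs i
        (Finset.mem_erase.2 ⟨hik, mem_univ i⟩)
      exact this
  · rintro ⟨k, rfl⟩
    have h2 : ∑ i, (if i = k then (1:ℝ) else 0) ^ 2 = 1 := by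
      rw [Finset.sum_eq_single k] <;> simp (config := {contextual := true})
    have h3 : ∑ i, (if i = k then (1:ℝ) else 0) ^ 3 = 1 := by
      rw [Finset.sum_eq_single k] <;> simp (config := {contextual := true})
    rw [h2, h3]; ring
end

section
/- Let n ≥ 2 and let H_1, ..., H_n be Hermitian complex d×d matrices. Define Υ(x) = exp( (i n/(n−1)) ∑_{j=1}^n x^j (x^j − 1/n) H_j ) for x ∈ ℝⁿ, using the matrix exponential. Then: (1) Υ(x) is unitary for every x ∈ ℝⁿ; (2) Υ(e) = I at the barycenter e = (1/n, ..., 1/n); (3) Υ(v_(k)) = exp(i H_k) at each vertex v_(k) of the simplex (where v_(k)^i = δ^i_k). -/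
/-!
The exponent of `Υ x` is `i · n/(n-1)` times a real combination of Hermitian matrices, hence
skew-Hermitian, so its exponential is unitary. At the barycenter every weight `x(x - 1/n)`
vanishes; at the vertex `v_(k)` only the `k`-th weight `1 - 1/n` survives, and it cancels
the prefactor `n/(n-1)`.
-/

open Finset Matrix NormedSpace

theorem Matrix.exp_mem_unitary_of_mem_skewAdjoint {m 𝔸 : Type*} [Fintype m] [DecidableEq m]
    [NormedRing 𝔸] [NormedAlgebra ℚ 𝔸] [CompleteSpace 𝔸] [StarRing 𝔸] [ContinuousStar 𝔸]
    {A : Matrix m m 𝔸} (hA : A ∈ skewAdjoint (Matrix m m 𝔸)) :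
    exp A ∈ unitary (Matrix m m 𝔸) := by
  have hA' : Aᴴ = -A := skewAdjoint.mem_iff.mp hA
  rw [Unitary.mem_iff, star_eq_conjTranspose, ← exp_conjTranspose, hA',
    ← exp_add_of_commute _ _ (Commute.refl A).neg_left,
    ← exp_add_of_commute _ _ (Commute.refl A).neg_right,
    neg_add_cancel, add_neg_cancel, exp_zero, and_self]

theorem isSelfAdjoint_sum_ofReal_smul {ι A : Type*} [Fintype ι] [AddCommMonoid A] [Module ℂ A]
    [StarAddMonoid A] [StarModule ℂ A] {H : ι → A} (hH : ∀ j, IsSelfAdjoint (H j)) (c : ι → ℝ) :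
    IsSelfAdjoint (∑ j, (c j : ℂ) • H j) :=
  isSelfAdjoint_sum _ fun j _ => IsSelfAdjoint.smul (Complex.conj_ofReal (c j)) (hH j)

theorem Complex.I_mul_natCast_div_mem_skewAdjoint (n : ℕ) :
    I * n / (n - 1) ∈ skewAdjoint ℂ := by
  simp [skewAdjoint.mem_iff, neg_div]

theorem Fintype.sum_apply_ite_smul {ι R M : Type*} [Fintype ι] [DecidableEq ι] [Semiring R]
    [AddCommMonoid M] [Module R M] {g : ℝ → R} (hg : g 0 = 0) (H : ι → M) (k : ι) :
    ∑ j, g (if j = k then 1 else 0) • H j = g 1 • H k := by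
  rw [Finset.sum_eq_single k (fun j _ hj => by simp [hj, hg]) (by simp)]
  simp

theorem div_sub_one_mul_one_sub_one_div {K : Type*} [Field K] {a : K} (h0 : a ≠ 0) (h1 : a ≠ 1) :
    a / (a - 1) * (1 - 1 / a) = 1 := by
  have : a - 1 ≠ 0 := sub_ne_zero.mpr h1
  field_simp

/-- For `n ≥ 2` and Hermitian matrices `H_j`, the map
`Υ(x) = exp((i n/(n−1)) ∑_j x^j (x^j − 1/n) H_j)` is unitary for every `x ∈ ℝⁿ`,
equals `I` at the barycenter `e = (1/n, ..., 1/n)`, and equals `exp(i H_k)` at each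
vertex `v_(k)` of the simplex. -/
theorem upsilonProperties {n d : ℕ} (hn : 2 ≤ n)
    (H : Fin n → Matrix (Fin d) (Fin d) ℂ)
    (hH : ∀ j, (H j)ᴴ = H j)
    (Υ : (Fin n → ℝ) → Matrix (Fin d) (Fin d) ℂ)
    (hΥ : Υ = fun x => exp
      ((Complex.I * n / (n - 1)) • ∑ j, ((x j * (x j - 1 / n) : ℝ) : ℂ) • H j)) :
    (∀ x : Fin n → ℝ, (Υ x)ᴴ * Υ x = 1) ∧
      Υ (fun _ => 1 / n) = 1 ∧
      ∀ k, Υ (fun i => if i = k then 1 else 0) = exp (Complex.I • H k) := by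
  subst hΥ
  refine ⟨fun x => ?_, by simp, fun k => ?_⟩
  · exact Unitary.star_mul_self_of_mem <| Matrix.exp_mem_unitary_of_mem_skewAdjoint <|
      (isSelfAdjoint_sum_ofReal_smul hH _).smul_mem_skewAdjoint
        (Complex.I_mul_natCast_div_mem_skewAdjoint n)
  · have hn0 : (n : ℂ) ≠ 0 := by norm_cast; omega
    have hn1 : (n : ℂ) ≠ 1 := by norm_cast; omega
    have hsum := Fintype.sum_apply_ite_smul (g := fun t : ℝ => ((t * (t - 1 / n) : ℝ) : ℂ))
      (by simp) H k
    have hcoeff : Complex.I * n / (n - 1) * ((1 * (1 - 1 / n) : ℝ) : ℂ) = Complex.I := by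
      push_cast
      rw [one_mul, mul_div_assoc, mul_assoc, div_sub_one_mul_one_sub_one_div hn0 hn1, mul_one]
    simp only [hsum, smul_smul, hcoeff]
end
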